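/- If δ := inf_i P(Λ_I)/P(Λ_i) > 0 where Λ_I = ⋂_{j=1}^{2N} Λ_j, and X_1, ..., X_{2N} are random variables bounded in [-1,1], then S_{C,N} ≤ δ·S_I + 2N(1-δ), where S_I is the chained Bell expression computed with conditional expectations on Λ_I and S_{C,N} is computed with conditional expectations E(X_i|Λ_i). -/

import Mathlib

/-!
Since `Λ_I ⊆ Λ_i`, splitting `∫_{Λ_i} X_i` over `Λ_I` and `Λ_i \ Λ_I` writes
`E(X_i|Λ_i) - δ E(X_i|Λ_I)` as `a (1/P(Λ_i) - δ/P(Λ_I)) + b/P(Λ_i)` with `|a| ≤ P(Λ_I)` and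
`|b| ≤ P(Λ_i) - P(Λ_I)`. The first coefficient is nonnegative because `δ ≤ P(Λ_I)/P(Λ_i)`, so this
difference is at most `1 - δ` in absolute value. Each of the `N` terms of `S_{C,N}` involves two
conditional expectations, hence exceeds `δ` times the matching term of `S_I` by at most `2(1 - δ)`.
-/

open MeasureTheory Finset

theorem abs_add_div_sub_mul_div_le {a b P Q δ : ℝ} (ha : |a| ≤ Q) (hb : |b| ≤ P - Q)
    (hδ : 0 < δ) (hδQP : δ ≤ Q / P) :
    |(a + b) / P - δ * (a / Q)| ≤ 1 - δ := by
  have hQP : 0 < Q / P := hδ.trans_le hδQP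
  have hQ : 0 < Q := by
    rcases div_pos_iff.mp hQP with h | h
    · exact h.1
    · linarith [abs_nonneg a, h.1]
  have hP : 0 < P := by linarith [abs_nonneg b]
  have hweight : 0 ≤ 1 / P - δ / Q := by
    rw [sub_nonneg, div_le_div_iff₀ hQ hP, one_mul, ← le_div_iff₀ hP]
    exact hδQP
  calc |(a + b) / P - δ * (a / Q)| = |a * (1 / P - δ / Q) + b * (1 / P)| := by
        congr 1; field_simp; ring
    _ ≤ |a| * (1 / P - δ / Q) + |b| * (1 / P) := by
        refine (abs_add_le _ _).trans_eq ?_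
        rw [abs_mul, abs_mul, abs_of_nonneg hweight, abs_of_pos (one_div_pos.mpr hP)]
    _ ≤ Q * (1 / P - δ / Q) + (P - Q) * (1 / P) := by gcongr
    _ = 1 - δ := by field_simp; ring

section SetIntegral

variable {Ω : Type*} [MeasurableSpace Ω] {μ : Measure Ω} [IsFiniteMeasure μ] {f : Ω → ℝ}

theorem abs_setIntegral_le_measureReal (hf : ∀ x, |f x| ≤ 1) (s : Set Ω) :
    |∫ x in s, f x ∂μ| ≤ μ.real s := by
  simpa using norm_setIntegral_le_of_norm_le_const (f := f) (measure_lt_top μ s) fun x _ => hf x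

theorem abs_setAverage_sub_mul_setAverage_le (hfm : AEStronglyMeasurable f μ)
    (hf : ∀ x, |f x| ≤ 1) {s t : Set Ω} (ht : MeasurableSet t) (hts : t ⊆ s) {δ : ℝ}
    (hδ : 0 < δ) (hδts : δ ≤ μ.real t / μ.real s) :
    |(∫ x in s, f x ∂μ) / μ.real s - δ * ((∫ x in t, f x ∂μ) / μ.real t)| ≤ 1 - δ := by
  have hint : IntegrableOn f s μ :=
    (Integrable.of_bound hfm 1 (.of_forall fun x => (Real.norm_eq_abs _).trans_le (hf x))
      ).integrableOn
  have hsplit : ∫ x in s, f x ∂μ = (∫ x in t, f x ∂μ) + ∫ x in s \ t, f x ∂μ := by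
    rw [setIntegral_sdiff ht hint hts]; ring
  have hrest : |∫ x in s \ t, f x ∂μ| ≤ μ.real s - μ.real t := by
    rw [← measureReal_sdiff hts ht]; exact abs_setIntegral_le_measureReal hf _
  rw [hsplit]
  exact abs_add_div_sub_mul_div_le (abs_setIntegral_le_measureReal hf t) hrest hδ hδts

end SetIntegral

theorem abs_add_le_mul_abs_add_of_abs_sub_mul_le {a b a' b' δ ε : ℝ} (hδ : 0 ≤ δ)
    (ha : |a - δ * a'| ≤ ε) (hb : |b - δ * b'| ≤ ε) :
    |a + b| ≤ δ * |a' + b'| + 2 * ε := by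
  have h := abs_sub_abs_le_abs_sub (a + b) (δ * (a' + b'))
  have hsplit : a + b - δ * (a' + b') = (a - δ * a') + (b - δ * b') := by ring
  rw [hsplit, abs_mul, abs_of_nonneg hδ] at h
  linarith [abs_add_le (a - δ * a') (b - δ * b')]

theorem abs_sub_le_mul_abs_sub_of_abs_sub_mul_le {a b a' b' δ ε : ℝ} (hδ : 0 ≤ δ)
    (ha : |a - δ * a'| ≤ ε) (hb : |b - δ * b'| ≤ ε) :
    |a - b| ≤ δ * |a' - b'| + 2 * ε := by
  have hb' : |-b - δ * -b'| ≤ ε := by rwa [show -b - δ * -b' = -(b - δ * b') by ring, abs_neg]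
  simpa only [sub_eq_add_neg] using abs_add_le_mul_abs_add_of_abs_sub_mul_le hδ ha hb'

/-- The chained Bell expression: `S_{C,N} = chainedSum N CE` and `S_I = chainedSum N CEI`. -/
def chainedSum (N : ℕ) (c : ℕ → ℝ) : ℝ :=
  (∑ k ∈ range (N - 1), |c (2 * k + 1) + c (2 * k + 2)|) + |c (2 * N - 1) - c (2 * N)|

theorem chainedSum_le_mul_chainedSum_add {N : ℕ} (hN : 1 ≤ N) {c c' : ℕ → ℝ} {δ ε : ℝ}
    (hδ : 0 ≤ δ) (hcc' : ∀ i ∈ Icc 1 (2 * N), |c i - δ * c' i| ≤ ε) :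
    chainedSum N c ≤ δ * chainedSum N c' + 2 * N * ε := by
  have hmem : ∀ i, 1 ≤ i → i ≤ 2 * N → i ∈ Icc 1 (2 * N) := fun i h₁ h₂ => mem_Icc.mpr ⟨h₁, h₂⟩
  have hpair : ∀ k ∈ range (N - 1), |c (2 * k + 1) + c (2 * k + 2)|
      ≤ δ * |c' (2 * k + 1) + c' (2 * k + 2)| + 2 * ε := fun k hk => by
    have := mem_range.mp hk
    exact abs_add_le_mul_abs_add_of_abs_sub_mul_le hδ (hcc' _ (hmem _ (by omega) (by omega)))
      (hcc' _ (hmem _ (by omega) (by omega)))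
  have hlast := abs_sub_le_mul_abs_sub_of_abs_sub_mul_le hδ
    (hcc' (2 * N - 1) (hmem _ (by omega) (by omega))) (hcc' (2 * N) (hmem _ (by omega) le_rfl))
  calc chainedSum N c
      ≤ (∑ k ∈ range (N - 1), (δ * |c' (2 * k + 1) + c' (2 * k + 2)| + 2 * ε))
        + (δ * |c' (2 * N - 1) - c' (2 * N)| + 2 * ε) := add_le_add (sum_le_sum hpair) hlast
    _ = δ * chainedSum N c' + 2 * N * ε := by
        rw [chainedSum, sum_add_distrib, sum_const, card_range, ← mul_sum, nsmul_eq_mul,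
          Nat.cast_sub hN]
        push_cast
        ring

theorem chained_delta_bound_general
    {Ω : Type*} [MeasurableSpace Ω] (μ : Measure Ω) [IsProbabilityMeasure μ]
    (N : ℕ) (hN : 2 ≤ N) (X : ℕ → Ω → ℝ)
    (hXmeas : ∀ i, Measurable (X i))
    (hXbound : ∀ i x, X i x ∈ Set.Icc (-1 : ℝ) 1)
    (Λ : ℕ → Set Ω) (hΛmeas : ∀ i, MeasurableSet (Λ i)) :
    let ΛI : Set Ω := ⋂ j ∈ Finset.Icc 1 (2 * N), Λ j
    let δ : ℝ := ⨅ i : Fin (2 * N), (μ ΛI).toReal / (μ (Λ (i + 1))).toReal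
    -- conditional expectations of X_k given Λ_k resp. Λ_I
    let CE : ℕ → ℝ := fun k => (∫ x in Λ k, X k x ∂μ) / (μ (Λ k)).toReal
    let CEI : ℕ → ℝ := fun k => (∫ x in ΛI, X k x ∂μ) / (μ ΛI).toReal
    0 < δ →
    (∑ k ∈ Finset.range (N - 1), |CE (2 * k + 1) + CE (2 * k + 2)|)
        + |CE (2 * N - 1) - CE (2 * N)|
      ≤ δ * ((∑ k ∈ Finset.range (N - 1), |CEI (2 * k + 1) + CEI (2 * k + 2)|)
          + |CEI (2 * N - 1) - CEI (2 * N)|)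
        + 2 * N * (1 - δ) := by
  intro ΛI δ CE CEI hδ
  have hΛI : MeasurableSet ΛI := measurableSet_biInter _ fun i _ => hΛmeas i
  have hδle : ∀ i ∈ Icc 1 (2 * N), δ ≤ μ.real ΛI / μ.real (Λ i) := by
    intro i hi
    have hbdd : BddBelow (Set.range fun j : Fin (2 * N) => μ.real ΛI / μ.real (Λ (j + 1))) :=
      ⟨0, by rintro _ ⟨j, rfl⟩; positivity⟩
    have hi₁ := (mem_Icc.mp hi).1
    have h := ciInf_le hbdd ⟨i - 1, by grind⟩
    rwa [Fin.val_mk, Nat.sub_add_cancel hi₁] at h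
  exact chainedSum_le_mul_chainedSum_add (by omega) hδ.le fun i hi =>
    abs_setAverage_sub_mul_setAverage_le (hXmeas i).aestronglyMeasurable
      (fun x => abs_le.mpr (hXbound i x)) hΛI (Set.biInter_subset_of_mem hi) hδ (hδle i hi)

/-- If δ := inf_i P(Λ_I)/P(Λ_i) > 0 with Λ_I = ⋂_{j=1}^{2N} Λ_j, and X₁,…,X_{2N}
    are random variables bounded in [-1,1], then S_{C,N} ≤ δ·S_I + 2N(1-δ),
    where S_I uses conditional expectations on Λ_I and S_{C,N} uses E(X_i|Λ_i). -/
theorem chained_delta_bound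
    {Ω : Type*} [MeasurableSpace Ω] (μ : Measure Ω) [IsProbabilityMeasure μ]
    (N : ℕ) (hN : 2 ≤ N) (X : ℕ → Ω → ℝ)
    (hXmeas : ∀ i, Measurable (X i))
    (hXbound : ∀ i x, X i x ∈ Set.Icc (-1 : ℝ) 1)
    (Λ : ℕ → Set Ω) (hΛmeas : ∀ i, MeasurableSet (Λ i))
    (hΛpos : ∀ i ∈ Finset.Icc 1 (2 * N), 0 < (μ (Λ i)).toReal) :
    let ΛI : Set Ω := ⋂ j ∈ Finset.Icc 1 (2 * N), Λ j
    let δ : ℝ := ⨅ i : Fin (2 * N), (μ ΛI).toReal / (μ (Λ (i + 1))).toReal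
    -- conditional expectations of X_k given Λ_k resp. Λ_I
    let CE : ℕ → ℝ := fun k => (∫ x in Λ k, X k x ∂μ) / (μ (Λ k)).toReal
    let CEI : ℕ → ℝ := fun k => (∫ x in ΛI, X k x ∂μ) / (μ ΛI).toReal
    0 < δ →
    (∑ k ∈ Finset.range (N - 1), |CE (2 * k + 1) + CE (2 * k + 2)|)
        + |CE (2 * N - 1) - CE (2 * N)|
      ≤ δ * ((∑ k ∈ Finset.range (N - 1), |CEI (2 * k + 1) + CEI (2 * k + 2)|)
          + |CEI (2 * N - 1) - CEI (2 * N)|)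
        + 2 * N * (1 - δ) :=
  chained_delta_bound_general μ N hN X hXmeas hXbound Λ hΛmeas
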